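/- For any field K and n ∈ ℕ, d(K, n, 4) > (3−√5)/2 · n², i.e., if d ≤ (3−√5)/2 · n² then every quadratic K-algebra with n generators and d quadratic relations has nonzero fourth graded component. -/

import Mathlib

open TensorProduct

namespace GS

variable (K : Type*) [Field K] (V : Type*) [AddCommGroup V] [Module K V]

/-- The tensor product of two subspaces, as a subspace of the tensor product. -/
noncomputable def tsub {M N : Type*} [AddCommGroup M] [Module K M] [AddCommGroup N] [Module K N]
    (A : Submodule K M) (B : Submodule K N) : Submodule K (M ⊗[K] N) :=
  LinearMap.range (TensorProduct.map A.subtype B.subtype)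

/-- `V ≃ V^{⊗1}`. -/
noncomputable def pow1 : V ≃ₗ[K] ⨂[K]^1 V :=
  (PiTensorProduct.subsingletonEquiv (R := K) (s := fun _ : Fin 1 => V) (0 : Fin 1)).symm

/-- `V ⊗ V ≃ V^{⊗2}`. -/
noncomputable def pow2 : (V ⊗[K] V) ≃ₗ[K] ⨂[K]^2 V :=
  (TensorProduct.congr (pow1 K V) (pow1 K V)).trans
    ((TensorPower.mulEquiv (n := 1) (m := 1)).trans (TensorPower.cast K V (by norm_num)))

/-- The subspace `V^{⊗a} ⊗ L ⊗ V^{⊗b}` of `V^{⊗(a+(2+b))}`. -/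
noncomputable def segAux (a b : ℕ) (L : Submodule K (V ⊗[K] V)) :
    Submodule K (⨂[K]^(a + (2 + b)) V) :=
  Submodule.map (TensorPower.mulEquiv (n := a) (m := 2 + b)).toLinearMap
    (tsub K (⊤ : Submodule K (⨂[K]^a V))
      (Submodule.map (TensorPower.mulEquiv (n := 2) (m := b)).toLinearMap
        (tsub K (L.map (pow2 K V).toLinearMap) (⊤ : Submodule K (⨂[K]^b V)))))

/-- For `j : Fin (q-1)`, the subspace `V^{⊗j} ⊗ L ⊗ V^{⊗(q-2-j)}` of `V^{⊗q}`
(the `(j+1)`-st shift of `L`). -/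
noncomputable def shiftSub (q : ℕ) (L : Submodule K (V ⊗[K] V)) (j : Fin (q - 1)) :
    Submodule K (⨂[K]^q V) :=
  Submodule.map (TensorPower.cast K V (by have := j.2; omega : (j : ℕ) + (2 + (q - 2 - j)) = q)).toLinearMap
    (segAux K V j (q - 2 - j) L)

/-- `E_q(L,V) = ⋂_{j=1}^{q-1} V^{⊗(j-1)} ⊗ L ⊗ V^{⊗(q-1-j)} ⊆ V^{⊗q}`. -/
noncomputable def Eint (q : ℕ) (L : Submodule K (V ⊗[K] V)) : Submodule K (⨂[K]^q V) :=
  ⨅ j : Fin (q - 1), shiftSub K V q L j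

/-- The degree-`q` component of the two-sided ideal generated by the subspace
`M ⊆ V ⊗ V` of quadratic relations: the sum of all shifts `V^{⊗(j-1)} ⊗ M ⊗ V^{⊗(q-1-j)}`. -/
noncomputable def idealComp (q : ℕ) (M : Submodule K (V ⊗[K] V)) : Submodule K (⨂[K]^q V) :=
  ⨆ j : Fin (q - 1), shiftSub K V q M j

/-- The dimension of the degree-`q` component of the quadratic algebra with space of
relations `M ⊆ V ⊗ V` (the quotient of `V^{⊗q}` by the degree-`q` component of the ideal). -/
noncomputable def quadDim (q : ℕ) (M : Submodule K (V ⊗[K] V)) : ℕ :=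
  Module.finrank K ((⨂[K]^q V) ⧸ idealComp K V q M)

/-- `h_q(K,n,d)`: the minimal dimension of the `q`-th graded component over all quadratic
`K`-algebras with `n` generators and `d` (linearly independent) quadratic relations. -/
noncomputable def hq (n d q : ℕ) : ℕ :=
  sInf { h | ∃ M : Submodule K ((Fin n → K) ⊗[K] (Fin n → K)),
      Module.finrank K M = d ∧ quadDim K (Fin n → K) q M = h }

end GS

/-! The degree-4 component of the relation ideal is the sum `S₀ + S₁ + S₂` of the three shifts
`V^{⊗j} ⊗ M ⊗ V^{⊗(2-j)}`, each of dimension `d n²`. The outer shifts both contain `M ⊗ M`, of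
dimension `d²`, so the sum has dimension at most `3 d n² - d²` and `dim A₄ ≥ n⁴ - 3 d n² + d²`.
Writing `N = n²`, this is `(c N - d)(c' N - d)` with `c, c' = (3 ∓ √5)/2`; it is positive for
`d ≤ c N`, since equality would make `√5` rational. -/

open Module

namespace GS

variable {K : Type*} [Field K]

theorem finrank_tsub {M N : Type*} [AddCommGroup M] [Module K M] [AddCommGroup N] [Module K N]
    [FiniteDimensional K M] [FiniteDimensional K N] (A : Submodule K M) (B : Submodule K N) :
    finrank K (tsub K A B) = finrank K A * finrank K B := by
  have hinj : Function.Injective (TensorProduct.map A.subtype B.subtype) := by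
    rw [← LinearMap.rTensor_comp_lTensor, LinearMap.coe_comp]
    exact (Module.Flat.rTensor_preserves_injective_linearMap _ A.injective_subtype).comp
      (Module.Flat.lTensor_preserves_injective_linearMap _ B.injective_subtype)
  rw [tsub, LinearMap.finrank_range_of_inj hinj, finrank_tensorProduct]

theorem finrank_sup_sup_add_le {W : Type*} [AddCommGroup W] [Module K W] [FiniteDimensional K W]
    {A B C T : Submodule K W} (hA : T ≤ A) (hC : T ≤ C) :
    finrank K ↥(A ⊔ B ⊔ C) + finrank K T ≤ finrank K A + finrank K B + finrank K C := by
  have hT : finrank K T ≤ finrank K ↥(A ⊓ (B ⊔ C)) :=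
    Submodule.finrank_mono (le_inf hA (hC.trans le_sup_right))
  have := Submodule.finrank_sup_add_finrank_inf_eq A (B ⊔ C)
  have := Submodule.finrank_add_le_finrank_add_finrank B C
  rw [sup_assoc]
  omega

theorem exists_submodule_finrank_eq {W : Type*} [AddCommGroup W] [Module K W]
    [FiniteDimensional K W] {d : ℕ} (hd : d ≤ finrank K W) :
    ∃ p : Submodule K W, finrank K p = d := by
  obtain ⟨f, hf⟩ := exists_linearIndependent_of_le_finrank hd
  exact ⟨Submodule.span K (Set.range f), by rw [finrank_span_eq_card hf, Fintype.card_fin]⟩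

variable {V : Type*} [AddCommGroup V] [Module K V]

local notation "ₜ1" => @GradedMonoid.GOne.one ℕ (fun i => ⨂[K]^i V) _ _
local infixl:70 " ₜ* " => @GradedMonoid.GMul.mul ℕ (fun i => ⨂[K]^i V) _ _ _ _

noncomputable def tensorSquare (L : Submodule K (V ⊗[K] V)) : Submodule K (⨂[K]^4 V) :=
  (tsub K (L.map (pow2 K V).toLinearMap) (L.map (pow2 K V).toLinearMap)).map
    (TensorPower.mulEquiv.trans (TensorPower.cast K V (by norm_num : 2 + 2 = 4))).toLinearMap

theorem cast_mul_mem_shiftSub_zero {L : Submodule K (V ⊗[K] V)} {x : ⨂[K]^2 V}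
    (hx : x ∈ L.map (pow2 K V).toLinearMap) (y : ⨂[K]^2 V) :
    TensorPower.cast K V (by norm_num : 2 + 2 = 4) (x ₜ* y) ∈ shiftSub K V 4 L 0 := by
  refine Submodule.mem_map.2 ⟨ₜ1 ₜ* (x ₜ* y), Submodule.mem_map.2 ⟨ₜ1 ⊗ₜ (x ₜ* y),
    ⟨⟨ₜ1, trivial⟩ ⊗ₜ ⟨_, Submodule.mem_map_of_mem ⟨⟨x, hx⟩ ⊗ₜ ⟨y, trivial⟩, rfl⟩⟩, rfl⟩, rfl⟩, ?_⟩
  conv_rhs => rw [← TensorPower.one_mul (x ₜ* y)]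
  rw [LinearEquiv.coe_coe, TensorPower.cast_cast]

theorem cast_mul_mem_shiftSub_two {L : Submodule K (V ⊗[K] V)} (x : ⨂[K]^2 V) {y : ⨂[K]^2 V}
    (hy : y ∈ L.map (pow2 K V).toLinearMap) :
    TensorPower.cast K V (by norm_num : 2 + 2 = 4) (x ₜ* y) ∈ shiftSub K V 4 L 2 := by
  refine Submodule.mem_map.2 ⟨x ₜ* (y ₜ* ₜ1), Submodule.mem_map.2 ⟨x ⊗ₜ (y ₜ* ₜ1),
    ⟨⟨x, trivial⟩ ⊗ₜ ⟨_, Submodule.mem_map_of_mem ⟨⟨y, hy⟩ ⊗ₜ ⟨ₜ1, trivial⟩, rfl⟩⟩, rfl⟩, rfl⟩, ?_⟩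
  rw [← TensorPower.mul_assoc]
  conv_rhs => rw [← TensorPower.mul_one (x ₜ* y)]
  rw [LinearEquiv.coe_coe, TensorPower.cast_cast]

theorem tensorSquare_le_inf (L : Submodule K (V ⊗[K] V)) :
    tensorSquare L ≤ shiftSub K V 4 L 0 ⊓ shiftSub K V 4 L 2 := by
  rw [tensorSquare, tsub, range_map_eq_span_tmul, Submodule.map_span, Submodule.span_le]
  rintro _ ⟨_, ⟨x, y, rfl⟩, rfl⟩
  rw [LinearEquiv.coe_coe, LinearEquiv.trans_apply, ← TensorPower.gMul_def, Submodule.coe_subtype,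
    SetLike.mem_coe]
  exact ⟨cast_mul_mem_shiftSub_zero x.2 _, cast_mul_mem_shiftSub_two _ y.2⟩

variable [FiniteDimensional K V]

instance (q : ℕ) : FiniteDimensional K (⨂[K]^q V) :=
  .of_basis (Basis.piTensorProduct fun _ => finBasis K V)

theorem finrank_tensorPower (q : ℕ) : finrank K (⨂[K]^q V) = finrank K V ^ q := by
  rw [finrank_eq_card_basis (Basis.piTensorProduct fun _ => finBasis K V)]
  simp

theorem finrank_shiftSub (q : ℕ) (L : Submodule K (V ⊗[K] V)) (j : Fin (q - 1)) :
    finrank K (shiftSub K V q L j) = finrank K L * finrank K V ^ (q - 2) := by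
  rw [shiftSub, LinearEquiv.finrank_map_eq, segAux, LinearEquiv.finrank_map_eq, finrank_tsub,
    LinearEquiv.finrank_map_eq, finrank_tsub, LinearEquiv.finrank_map_eq]
  simp only [finrank_top, finrank_tensorPower]
  rw [mul_left_comm, ← pow_add, show (j : ℕ) + (q - 2 - j) = q - 2 by omega]

theorem finrank_tensorSquare (L : Submodule K (V ⊗[K] V)) :
    finrank K (tensorSquare L) = finrank K L * finrank K L := by
  rw [tensorSquare, LinearEquiv.finrank_map_eq, finrank_tsub, LinearEquiv.finrank_map_eq]

theorem finrank_idealComp_four_add_sq_le (L : Submodule K (V ⊗[K] V)) :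
    finrank K (idealComp K V 4 L) + finrank K L ^ 2 ≤ 3 * finrank K L * finrank K V ^ 2 := by
  let S := shiftSub K V 4 L
  have hsup : idealComp K V 4 L ≤ S 0 ⊔ S 1 ⊔ S 2 := by
    refine iSup_le fun j => ?_
    fin_cases j
    · exact le_sup_left.trans le_sup_left
    · exact le_sup_right.trans le_sup_left
    · exact le_sup_right
  have hcount := finrank_sup_sup_add_le (B := S 1) ((tensorSquare_le_inf L).trans inf_le_left)
    ((tensorSquare_le_inf L).trans inf_le_right)
  simp only [S, finrank_tensorSquare, finrank_shiftSub, Nat.reduceSub] at hcount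
  have := Submodule.finrank_mono hsup
  linarith

theorem golodShafarevich_quadDim_four (L : Submodule K (V ⊗[K] V)) :
    finrank K V ^ 4 + finrank K L ^ 2 ≤ quadDim K V 4 L + 3 * finrank K L * finrank K V ^ 2 := by
  have hquot := Submodule.finrank_quotient_add_finrank (idealComp K V 4 L)
  rw [finrank_tensorPower] at hquot
  have := finrank_idealComp_four_add_sq_le L
  rw [quadDim]
  omega

end GS

theorem three_mul_mul_sq_lt_of_le_three_sub_sqrt_five {n d : ℕ} (hn : 1 ≤ n)
    (hd : (d : ℝ) ≤ (3 - Real.sqrt 5) / 2 * (n : ℝ) ^ 2) : 3 * d * n ^ 2 < n ^ 4 + d ^ 2 := by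
  have hs : Real.sqrt 5 ^ 2 = 5 := Real.sq_sqrt (by norm_num)
  have hn0 : (n : ℝ) ≠ 0 := Nat.cast_ne_zero.2 (by omega)
  have hne : (d : ℝ) ≠ (3 - Real.sqrt 5) / 2 * (n : ℝ) ^ 2 := by
    intro h
    refine Nat.prime_five.irrational_sqrt ⟨(3 * n ^ 2 - 2 * d) / n ^ 2, ?_⟩
    push_cast
    rw [h]
    field_simp
    ring
  have hlt : 0 < (3 - Real.sqrt 5) / 2 * (n : ℝ) ^ 2 - d := sub_pos.2 (lt_of_le_of_ne hd hne)
  have hlt' : 0 < (3 + Real.sqrt 5) / 2 * (n : ℝ) ^ 2 - d := by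
    nlinarith [Real.sqrt_nonneg 5]
  have hfactor : ((3 - Real.sqrt 5) / 2 * (n : ℝ) ^ 2 - d) * ((3 + Real.sqrt 5) / 2 * n ^ 2 - d) =
      n ^ 4 + d ^ 2 - 3 * d * n ^ 2 := by
    linear_combination (-(n : ℝ) ^ 4 / 4) * hs
  suffices (3 * d * n ^ 2 : ℝ) < n ^ 4 + d ^ 2 by exact_mod_cast this
  linarith [mul_pos hlt hlt']

/-- For any field `K` and `n ≥ 1`, `d(K, n, 4) > (3 − √5)/2 · n²`:
if `d ≤ (3 − √5)/2 · n²`, then every quadratic `K`-algebra with `n` generators and `d`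
quadratic relations has nonzero fourth graded component. -/
theorem d_four_lower_bound (K : Type*) [Field K] (n : ℕ) (hn : 1 ≤ n) (d : ℕ)
    (hd : (d : ℝ) ≤ (3 - Real.sqrt 5) / 2 * (n : ℝ) ^ 2) :
    GS.hq K n d 4 ≠ 0 ∧
    ∀ M : Submodule K ((Fin n → K) ⊗[K] (Fin n → K)), Module.finrank K M = d →
      GS.quadDim K (Fin n → K) 4 M ≠ 0 := by
  have hV : finrank K (Fin n → K) = n := finrank_fin_fun K
  have hpos := three_mul_mul_sq_lt_of_le_three_sub_sqrt_five hn hd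
  have hquadDim : ∀ M : Submodule K ((Fin n → K) ⊗[K] (Fin n → K)), finrank K M = d →
      GS.quadDim K (Fin n → K) 4 M ≠ 0 := by
    intro M hM h0
    have := GS.golodShafarevich_quadDim_four M
    rw [hV, hM, h0] at this
    omega
  refine ⟨fun h0 => ?_, hquadDim⟩
  have hdn : d ≤ finrank K ((Fin n → K) ⊗[K] (Fin n → K)) := by
    have : (1 : ℝ) ≤ Real.sqrt 5 := Real.one_le_sqrt.2 (by norm_num)
    rw [finrank_tensorProduct, hV, ← sq]
    exact_mod_cast (hd.trans (by nlinarith [sq_nonneg (n : ℝ)]) : (d : ℝ) ≤ (n : ℝ) ^ 2)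
  obtain ⟨M₀, hM₀⟩ := GS.exists_submodule_finrank_eq hdn
  obtain ⟨M, hM, hdim⟩ : GS.hq K n d 4 ∈ _ := Nat.sInf_mem ⟨_, M₀, hM₀, rfl⟩
  exact hquadDim M hM (hdim.trans h0)
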